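/- Let G=(V,E) be a finite graph and β > 0. A current is an element n ∈ ℕ^E; its sources are the vertices v at which the sum of n_e over edges e incident to v is odd, and its weight is w_β(n) = Π_{e∈E} β^{n_e}/n_e!. The sourceless random current measure is the probability measure on sourceless currents proportional to w_β, and the traced sourceless random current 𝐏_{β,G} is its pushforward to configurations under n ↦ (indicator of n_e > 0)_{e∈E}. If η and ζ are independent random configurations with η distributed according to the loop O(1) measure ℓ^0_{x,G} for x = tanh(β) and ζ distributed according to Bernoulli bond percolation P_{q,G} with q = 1 − 1/cosh(β), then the pointwise maximum η ∨ ζ (union of the open edge sets) is distributed according to 𝐏_{β,G}. -/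

import Mathlib

open MeasureTheory

noncomputable section

attribute [local instance] Classical.propDecidable

/-- The source (mod-2 boundary) of a configuration on a set `E` of edges, at a vertex `v`. -/
def srcAt {V : Type*} {E : Set (Sym2 V)} (ω : E → ZMod 2) (v : V) : ZMod 2 :=
  (Set.ncard {e : E | ω e = 1 ∧ v ∈ (e : Sym2 V)} : ZMod 2)

/-- A configuration is even (sourceless). -/
def IsEvenConf {V : Type*} {E : Set (Sym2 V)} (ω : E → ZMod 2) : Prop :=
  ∀ v : V, srcAt ω v = 0

variable {V : Type} [Fintype V] [DecidableEq V] (G : SimpleGraph V) [Fintype G.edgeSet]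

/-- The number of open edges of a configuration. -/
def openCount (ω : G.edgeSet → ZMod 2) : ℕ :=
  (Finset.univ.filter fun e : G.edgeSet => ω e = 1).card

/-- The number `κ^ξ(ω)` of classes of the smallest equivalence relation containing the
boundary condition `ξ` and relating the endpoints of every open edge of `ω`. -/
def clusterCount (ξ : V → V → Prop) (ω : G.edgeSet → ZMod 2) : ℕ :=
  Nat.card (Quot (fun a b : V =>
    ξ a b ∨ ∃ h : G.Adj a b, ω ⟨s(a, b), (G.mem_edgeSet).mpr h⟩ = 1))

/-- The random-cluster weight of a configuration. -/
def rcWeight (p : ℝ) (ξ : V → V → Prop) (ω : G.edgeSet → ZMod 2) : ℝ :=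
  p ^ openCount G ω * (1 - p) ^ (Fintype.card G.edgeSet - openCount G ω) *
    2 ^ clusterCount G ξ ω

/-- The random-cluster measure `φ^ξ_{p,G}` as a probability mass function. -/
def rcPMF (p : ℝ) (ξ : V → V → Prop) (ω : G.edgeSet → ZMod 2) : ℝ :=
  rcWeight G p ξ ω / ∑ ω' : G.edgeSet → ZMod 2, rcWeight G p ξ ω'

/-- The loop O(1) measure `ℓ^0_{x,G}` as a probability mass function. -/
def loopPMF (x : ℝ) (η : G.edgeSet → ZMod 2) : ℝ :=
  (if IsEvenConf η then x ^ openCount G η else 0) /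
    ∑ η' : G.edgeSet → ZMod 2, if IsEvenConf η' then x ^ openCount G η' else 0

/-- Bernoulli(p) bond percolation as a probability mass function. -/
def berPMF (p : ℝ) (ζ : G.edgeSet → ZMod 2) : ℝ :=
  p ^ openCount G ζ * (1 - p) ^ (Fintype.card G.edgeSet - openCount G ζ)

/-- The union (pointwise maximum) of two configurations. -/
def unionConf (η ζ : G.edgeSet → ZMod 2) : G.edgeSet → ZMod 2 :=
  fun e => if η e = 1 ∨ ζ e = 1 then 1 else 0

/-- The weight `w_β(n) = ∏_e β^{n_e}/n_e!` of a current. -/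
def curWeight (β : ℝ) (n : G.edgeSet → ℕ) : ℝ :=
  ∏ e : G.edgeSet, β ^ n e / (Nat.factorial (n e) : ℝ)

/-- A current is sourceless: at every vertex the sum of the current over incident edges
is even. -/
def Sourceless (n : G.edgeSet → ℕ) : Prop :=
  ∀ v : V, Even (∑ e : G.edgeSet, if v ∈ (e : Sym2 V) then n e else 0)

/-- The trace of a current: the configuration of its positive edges. -/
def traceCur (n : G.edgeSet → ℕ) : G.edgeSet → ZMod 2 :=
  fun e => if n e = 0 then 0 else 1

/-- The traced sourceless random current measure `𝐏_{β,G}` as a probability mass function. -/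
def tracedCurrentPMF (β : ℝ) (ω : G.edgeSet → ZMod 2) : ℝ :=
  (∑' n : {n : G.edgeSet → ℕ // Sourceless G n ∧ traceCur G n = ω}, curWeight G β n.1) /
    ∑' n : {n : G.edgeSet → ℕ // Sourceless G n}, curWeight G β n.1

/-!
Group the sourceless currents `n` by their parity `η = n mod 2`, an even configuration. For fixed
`η` and trace `ω` the weight of the currents factorises over the edges, and the one-edge sums are
`∑_{k ≡ h, 1[k > 0] = w} β^k / k! = cosh β · x^h · P(h ∨ ζ = w)` with `x = tanh β` and `ζ` a
Bernoulli(`1 - 1 / cosh β`) bit. Summing over even `η`, the factors `cosh β` cancel between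
numerator and denominator, and what is left is the law of `η ∨ ζ` with `η` a loop O(1) sample.
-/

open Finset Nat

lemma zmod_two_eq_zero_or_one : ∀ a : ZMod 2, a = 0 ∨ a = 1 := by decide

lemma sum_zmod_two {M : Type*} [AddCommMonoid M] (f : ZMod 2 → M) :
    ∑ z : ZMod 2, f z = f 0 + f 1 :=
  Fin.sum_univ_two f

theorem hasSum_pi_prod_of_nonneg {ι κ : Type*} [Fintype ι] {f : ι → κ → ℝ} {S : ι → ℝ}
    (hf : ∀ i k, 0 ≤ f i k) (hS : ∀ i, HasSum (f i) (S i)) :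
    HasSum (fun n : ι → κ => ∏ i, f i (n i)) (∏ i, S i) := by
  let P : (ι : Type _) → [Fintype ι] → Prop := fun ι _ => ∀ (f : ι → κ → ℝ) (S : ι → ℝ),
    (∀ i k, 0 ≤ f i k) → (∀ i, HasSum (f i) (S i)) →
      HasSum (fun n : ι → κ => ∏ i, f i (n i)) (∏ i, S i)
  refine @Fintype.induction_empty_option P ?_ ?_ ?_ ι _ f S hf hS
  · intro α β _ e ih f S hf hS
    let : Fintype α := Fintype.ofEquiv β e.symm
    have h := ih (fun a => f (e a)) (fun a => S (e a)) (fun a => hf (e a)) (fun a => hS (e a))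
    rw [Fintype.prod_equiv e _ S fun _ => rfl] at h
    refine ((Equiv.arrowCongr e (Equiv.refl κ)).hasSum_iff).1 (h.congr_fun fun n => ?_)
    exact (Fintype.prod_equiv e (fun a => f (e a) (n a)) (fun b => f b (n (e.symm b)))
      fun a => by simp).symm
  · intro f S _ _
    simp
  · intro α _ ih f S hf hS
    have hsome := ih _ _ (fun a => hf (some a)) (fun a => hS (some a))
    have h := (hS none).mul hsome <| (hS none).summable.mul_of_nonneg hsome.summable
      (hf none) fun n => prod_nonneg fun a _ => hf (some a) (n a)
    rw [Fintype.prod_option]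
    exact (Equiv.piOptionEquivProd.symm.hasSum_iff).1 (h.congr_fun fun n => Fintype.prod_option _)

lemma hasSum_ite_even_exp (β : ℝ) :
    HasSum (fun k : ℕ => if Even k then β ^ k / k ! else 0) (Real.cosh β) := by
  refine ((mul_right_injective₀ two_ne_zero).hasSum_iff fun k hk => if_neg ?_).1 ?_
  · rintro ⟨m, rfl⟩
    exact hk ⟨m, two_mul m⟩
  · simpa [Function.comp_def] using Real.hasSum_cosh β

lemma hasSum_ite_odd_exp (β : ℝ) :
    HasSum (fun k : ℕ => if Odd k then β ^ k / k ! else 0) (Real.sinh β) := by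
  have hinj : Function.Injective fun m : ℕ => 2 * m + 1 := fun m n h => by simpa using h
  refine (hinj.hasSum_iff fun k hk => if_neg ?_).1 ?_
  · rintro ⟨m, rfl⟩
    exact hk ⟨m, rfl⟩
  · simpa [Function.comp_def] using Real.hasSum_sinh β

lemma hasSum_ite_natCast_eq_exp (β : ℝ) (h : ZMod 2) :
    HasSum (fun k : ℕ => if (k : ZMod 2) = h then β ^ k / k ! else 0)
      (Real.cosh β * if h = 1 then Real.tanh β else 1) := by
  rcases zmod_two_eq_zero_or_one h with rfl | rfl
  · simpa [ZMod.natCast_eq_zero_iff_even] using hasSum_ite_even_exp β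
  · simpa [ZMod.natCast_eq_one_iff_odd, Real.tanh_eq_sinh_div_cosh,
      mul_div_cancel₀ _ (Real.cosh_pos β).ne'] using hasSum_ite_odd_exp β

def bernoulliUnionProb (q : ℝ) (h w : ZMod 2) : ℝ :=
  ∑ z : ZMod 2, if (if h = 1 ∨ z = 1 then 1 else 0) = w then if z = 1 then q else 1 - q else 0

lemma hasSum_ite_natCast_eq_trace_exp (β : ℝ) (h w : ZMod 2) :
    HasSum (fun k : ℕ => if (k : ZMod 2) = h then
        if (if k = 0 then 0 else 1 : ZMod 2) = w then β ^ k / k ! else 0 else 0)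
      (Real.cosh β * ((if h = 1 then Real.tanh β else 1) *
        bernoulliUnionProb (1 - 1 / Real.cosh β) h w)) := by
  have hc := (Real.cosh_pos β).ne'
  -- the trace condition forces `k = 0` when `w = 0` and excludes it when `w = 1`
  rcases zmod_two_eq_zero_or_one w with rfl | rfl
  · have hval : Real.cosh β * ((if h = 1 then Real.tanh β else 1) *
        bernoulliUnionProb (1 - 1 / Real.cosh β) h 0) = if h = 0 then 1 else 0 := by
      rcases zmod_two_eq_zero_or_one h with rfl | rfl <;>
        simp [bernoulliUnionProb, sum_zmod_two, hc]
    rw [hval]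
    refine (hasSum_ite_eq 0 _).congr_fun fun k => ?_
    rcases eq_or_ne k 0 with rfl | hk
    · simp [eq_comm]
    · simp [hk]
  · have hval : Real.cosh β * ((if h = 1 then Real.tanh β else 1) *
        bernoulliUnionProb (1 - 1 / Real.cosh β) h 1) =
        (Real.cosh β * if h = 1 then Real.tanh β else 1) - if h = 0 then 1 else 0 := by
      rcases zmod_two_eq_zero_or_one h with rfl | rfl <;>
        simp [bernoulliUnionProb, sum_zmod_two, mul_sub, hc]
    rw [hval]
    refine ((hasSum_ite_natCast_eq_exp β h).sub (hasSum_ite_eq 0 _)).congr_fun fun k => ?_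
    rcases eq_or_ne k 0 with rfl | hk
    · simp [eq_comm]
    · simp [hk]

section EvenSum

variable {V : Type*} {E : Set (Sym2 V)} [Fintype E] [DecidableEq E]

def evenConfSum (g : E → ZMod 2 → ℝ) : ℝ :=
  ∑ η : E → ZMod 2, if IsEvenConf η then ∏ e, g e (η e) else 0

lemma evenConfSum_const_mul (c : ℝ) (g : E → ZMod 2 → ℝ) :
    evenConfSum (fun e h => c * g e h) = c ^ Fintype.card E * evenConfSum g := by
  simp only [evenConfSum, mul_sum, prod_mul_distrib, prod_const, mul_ite, mul_zero,
    Finset.card_univ]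

end EvenSum

section Graph

variable {V : Type} (G : SimpleGraph V) [Fintype G.edgeSet]

lemma prod_ite_eq_pow_openCount (ω : G.edgeSet → ZMod 2) (a b : ℝ) :
    ∏ e, (if ω e = 1 then a else b) =
      a ^ openCount G ω * b ^ (Fintype.card G.edgeSet - openCount G ω) := by
  rw [prod_ite, prod_const, prod_const, openCount, ← Finset.card_univ,
    ← card_filter_add_card_filter_not (s := univ) (fun e => ω e = 1), Nat.add_sub_cancel_left]

variable [DecidableEq V]

lemma sourceless_iff_isEvenConf (n : G.edgeSet → ℕ) :
    Sourceless G n ↔ IsEvenConf fun e => (n e : ZMod 2) := by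
  refine forall_congr' fun v => ?_
  rw [← ZMod.natCast_eq_zero_iff_even, srcAt, Set.ncard_eq_toFinset_card', Set.toFinset_ofPred,
    natCast_card_filter, Nat.cast_sum]
  refine Eq.congr_left (sum_congr rfl fun e _ => ?_)
  rcases zmod_two_eq_zero_or_one (n e : ZMod 2) with h | h <;> by_cases hv : v ∈ (e : Sym2 V) <;>
    simp [h, hv]

lemma hasSum_indicator_sourceless_prod {f : G.edgeSet → ℕ → ℝ} {S : G.edgeSet → ZMod 2 → ℝ}
    (hf : ∀ e k, 0 ≤ f e k)
    (hS : ∀ e h, HasSum (fun k : ℕ => if (k : ZMod 2) = h then f e k else 0) (S e h)) :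
    HasSum ({n | Sourceless G n}.indicator fun n => ∏ e, f e (n e)) (evenConfSum S) := by
  have hparity : ∀ η : G.edgeSet → ZMod 2, HasSum
      (fun n : G.edgeSet → ℕ =>
        if IsEvenConf η then ∏ e, (if (n e : ZMod 2) = η e then f e (n e) else 0) else 0)
      (if IsEvenConf η then ∏ e, S e (η e) else 0) := by
    intro η
    by_cases hη : IsEvenConf η
    · simp only [if_pos hη]
      exact hasSum_pi_prod_of_nonneg
        (f := fun e (k : ℕ) => if (k : ZMod 2) = η e then f e k else 0)
        (fun e k => ite_nonneg (hf e k) le_rfl) fun e => hS e (η e)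
    · simp only [if_neg hη]
      exact hasSum_zero
  refine (hasSum_sum fun η _ => hparity η).congr_fun fun n => ?_
  -- only the parity of `n` contributes
  rw [sum_eq_single_of_mem (fun e : G.edgeSet => (n e : ZMod 2)) (mem_univ _) fun η _ hη => ?_]
  · simp [Set.indicator_apply, sourceless_iff_isEvenConf]
  · obtain ⟨e, he⟩ := Function.ne_iff.1 hη
    have hne : ¬ ∀ e', (n e' : ZMod 2) = η e' := fun h => he (h e).symm
    simp only [prod_ite_zero, mem_univ, true_implies, hne, if_false, ite_self]

lemma hasSum_curWeight_sourceless {β : ℝ} (hβ : 0 ≤ β) :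
    HasSum (fun n : {n // Sourceless G n} => curWeight G β n)
      (evenConfSum fun (_ : G.edgeSet) h => Real.cosh β * if h = 1 then Real.tanh β else 1) :=
  hasSum_subtype_iff_indicator.2 <| hasSum_indicator_sourceless_prod G
    (fun _ k => div_nonneg (pow_nonneg hβ k) k.factorial.cast_nonneg)
    fun _ h => hasSum_ite_natCast_eq_exp β h

lemma hasSum_curWeight_sourceless_traceCur {β : ℝ} (hβ : 0 ≤ β) (ω : G.edgeSet → ZMod 2) :
    HasSum (fun n : {n // Sourceless G n ∧ traceCur G n = ω} => curWeight G β n)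
      (evenConfSum fun e h => Real.cosh β * ((if h = 1 then Real.tanh β else 1) *
        bernoulliUnionProb (1 - 1 / Real.cosh β) h (ω e))) := by
  have htrace : {n | traceCur G n = ω}.indicator (curWeight G β) = fun n =>
      ∏ e, if (if n e = 0 then 0 else 1 : ZMod 2) = ω e then β ^ n e / (n e)! else 0 := by
    funext n
    simp only [Set.indicator_apply, Set.mem_ofPred_eq, prod_ite_zero, mem_univ, true_implies,
      funext_iff, curWeight, traceCur]
  refine (hasSum_subtype_iff_indicator (f := curWeight G β)
    (s := {n | Sourceless G n ∧ traceCur G n = ω})).2 ?_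
  rw [Set.ofPred_and, ← Set.indicator_indicator, htrace]
  exact hasSum_indicator_sourceless_prod G
    (f := fun e k => if (if k = 0 then 0 else 1 : ZMod 2) = ω e then β ^ k / k ! else 0)
    (fun _ k => ite_nonneg (div_nonneg (pow_nonneg hβ k) k.factorial.cast_nonneg) le_rfl)
    fun e h => hasSum_ite_natCast_eq_trace_exp β h (ω e)

lemma sum_ite_unionConf_eq_prod (q : ℝ) (η ω : G.edgeSet → ZMod 2) :
    ∑ ζ : G.edgeSet → ZMod 2, (if unionConf G η ζ = ω then berPMF G q ζ else 0) =
      ∏ e, bernoulliUnionProb q (η e) (ω e) := by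
  simp only [bernoulliUnionProb, Fintype.prod_sum, prod_ite_zero, mem_univ, true_implies]
  refine sum_congr rfl fun ζ _ => ?_
  simp only [berPMF, ← prod_ite_eq_pow_openCount, unionConf, funext_iff]

lemma sum_ite_unionConf_loopPMF_mul_berPMF (x q : ℝ) (ω : G.edgeSet → ZMod 2) :
    ∑ η : G.edgeSet → ZMod 2, ∑ ζ : G.edgeSet → ZMod 2,
        (if unionConf G η ζ = ω then loopPMF G x η * berPMF G q ζ else 0) =
      evenConfSum (fun e h => (if h = 1 then x else 1) * bernoulliUnionProb q h (ω e)) /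
        evenConfSum (fun (_ : G.edgeSet) h => if h = 1 then x else 1) := by
  have hpow : ∀ η : G.edgeSet → ZMod 2, x ^ openCount G η = ∏ e, if η e = 1 then x else 1 := by
    intro η
    rw [prod_ite_eq_pow_openCount, one_pow, mul_one]
  have hinner : ∀ η, ∑ ζ, (if unionConf G η ζ = ω then loopPMF G x η * berPMF G q ζ else 0) =
      loopPMF G x η * ∏ e, bernoulliUnionProb q (η e) (ω e) := fun η => by
    simp only [← mul_ite_zero, ← mul_sum, sum_ite_unionConf_eq_prod]
  rw [sum_congr rfl fun η _ => hinner η]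
  simp only [loopPMF, hpow, evenConfSum, div_mul_eq_mul_div, ite_mul, zero_mul, ← sum_div,
    ← prod_mul_distrib]

end Graph

theorem loop_union_bernoulli_is_traced_current_general {V : Type} [DecidableEq V]
    (G : SimpleGraph V) [Fintype G.edgeSet]
    (β : ℝ) (hβ : 0 < β) (x q : ℝ)
    (hx : x = Real.tanh β) (hq : q = 1 - 1 / Real.cosh β)
    (ω : G.edgeSet → ZMod 2) :
    ∑ η : G.edgeSet → ZMod 2, ∑ ζ : G.edgeSet → ZMod 2,
        (if unionConf G η ζ = ω then loopPMF G x η * berPMF G q ζ else 0)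
      = tracedCurrentPMF G β ω := by
  subst hx hq
  rw [sum_ite_unionConf_loopPMF_mul_berPMF, tracedCurrentPMF,
    (hasSum_curWeight_sourceless_traceCur G hβ.le ω).tsum_eq,
    (hasSum_curWeight_sourceless G hβ.le).tsum_eq, evenConfSum_const_mul, evenConfSum_const_mul,
    mul_div_mul_left _ _ (pow_ne_zero _ (Real.cosh_pos β).ne')]

/-- The union of an independent loop O(1) sample with `x = tanh β` and a
Bernoulli(1 − 1/cosh β) sample is distributed as the traced sourceless random current. -/
theorem loop_union_bernoulli_is_traced_current {V : Type} [Fintype V] [DecidableEq V]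
    (G : SimpleGraph V) [Fintype G.edgeSet]
    (β : ℝ) (hβ : 0 < β) (x q : ℝ)
    (hx : x = Real.tanh β) (hq : q = 1 - 1 / Real.cosh β)
    (ω : G.edgeSet → ZMod 2) :
    ∑ η : G.edgeSet → ZMod 2, ∑ ζ : G.edgeSet → ZMod 2,
        (if unionConf G η ζ = ω then loopPMF G x η * berPMF G q ζ else 0)
      = tracedCurrentPMF G β ω :=
  loop_union_bernoulli_is_traced_current_general G β hβ x q hx hq ω
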